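/- (One-step three-term error decomposition.) Fix k ∈ {1,…,τ}. Let Q, Q₁ : 𝒮_k → (bounded real random variables measurable with respect to Z) be given, define the true step regression m_k(s̄_k, a, h) = E[Q(s̄_k) ∣ A_k = a, H_k = h] and q_k(s̄_{k−1}, a, h) = m_k((s̄_{k−1}, a), d_k((s̄_{k−1}, a), h), h); let m_{k,1} : 𝒮_k × 𝒜_k × ℋ_k → ℝ be arbitrary with q_{k,1}(s̄_{k−1}, a, h) = m_{k,1}((s̄_{k−1}, a), d_k((s̄_{k−1}, a), h), h); and let g_{k,1}(a∣h) > 0 be arbitrary positive weights. Writing D_k(s̄_k) = 1{A_k = d_k(s̄_k, H_k)} and s̄_k = (s̄_{k−1}, s_k), for every s̄_{k−1} ∈ 𝒮_{k−1} and (a, h) ∈ 𝒜_{k−1} × ℋ_{k−1}: E[q_{k,1}(s̄_{k−1}, A_k, H_k) − q_k(s̄_{k−1}, A_k, H_k) ∣ A_{k−1} = a, H_{k−1} = h] = E[ Σ_{s_k} D_k(s̄_k)( g_k(s_k∣H_k)/g_k(A_k∣H_k) − g_{k,1}(s_k∣H_k)/g_{k,1}(A_k∣H_k) )( m_{k,1}(s̄_k,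 A_k, H_k) − m_k(s̄_k, A_k, H_k) ) ∣ A_{k−1} = a, H_{k−1} = h ] − E[ Σ_{s_k} D_k(s̄_k)( g_{k,1}(s_k∣H_k)/g_{k,1}(A_k∣H_k) )( Q₁(s̄_k) − m_{k,1}(s̄_k, A_k, H_k) ) ∣ A_{k−1} = a, H_{k−1} = h ] + E[ Σ_{s_k} D_k(s̄_k)( g_{k,1}(s_k∣H_k)/g_{k,1}(A_k∣H_k) ) E[ Q₁(s̄_k) − Q(s̄_k) ∣ A_k, H_k ] ∣ A_{k−1} = a, H_{k−1} = h ], where for k = 1 the outer conditioning is omitted (unconditional expectations). -/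

import Mathlib

open MeasureTheory Finset

namespace GLMTP

variable {τ : ℕ}

/-- Augmented natural-treatment history: one treatment value for each time index `< tp`
(0-based; the paper's `s̄_t` corresponds to `tp = t`). -/
abbrev SbarN (𝓐 : Fin τ → Type) (tp : ℕ) : Type :=
  ∀ s : {s : Fin τ // s.val < tp}, 𝓐 s.1

/-- Observed history `H_t = (L_1, A_1, …, A_{t-1}, L_t)`: covariates up to (and including)
time `t` and treatments strictly before time `t`. -/
abbrev Hist (𝓐 𝓛 : Fin τ → Type) (t : Fin τ) : Type :=
  (∀ s : {s : Fin τ // s ≤ t}, 𝓛 s.1) × (∀ s : {s : Fin τ // s < t}, 𝓐 s.1)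

/-- A generalized longitudinal modified treatment policy: at each time `t` it maps the
history of natural treatment values `(a_1, …, a_t)` and the history `h_t` to a treatment. -/
abbrev Policy (𝓐 𝓛 : Fin τ → Type) : Type :=
  ∀ t : Fin τ, SbarN 𝓐 (t.val + 1) → Hist 𝓐 𝓛 t → 𝓐 t

variable {𝓐 𝓛 : Fin τ → Type}

/-- The empty augmented history `s̄_0`. -/
def emptySbar (𝓐 : Fin τ → Type) : SbarN 𝓐 0 :=
  fun s => absurd s.2 (Nat.not_lt_zero _)

def restrictSb {tp tp' : ℕ} (h : tp' ≤ tp) (sb : SbarN 𝓐 tp) : SbarN 𝓐 tp' :=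
  fun s => sb ⟨s.1, lt_of_lt_of_le s.2 h⟩

/-- Append a treatment value at time `t` to an augmented history `s̄_{t-1}`. -/
def snoc {t : Fin τ} (sb : SbarN 𝓐 t.val) (a : 𝓐 t) : SbarN 𝓐 (t.val + 1) :=
  fun s =>
    if h : s.1 = t then cast (congrArg 𝓐 h).symm a
    else sb ⟨s.1, lt_of_le_of_ne (Nat.lt_succ_iff.mp s.2) (fun hv => h (Fin.ext hv))⟩

/-- Extension of an augmented history: treatment values at times `tp ≤ u ≤ k` (0-based),
i.e. the summation variables `s_{t+1}, …, s_k` of the paper. -/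
abbrev Ext (𝓐 : Fin τ → Type) (tp : ℕ) (k : Fin τ) : Type :=
  ∀ s : {s : Fin τ // tp ≤ s.val ∧ s.val ≤ k.val}, 𝓐 s.1

def mergeExt {tp : ℕ} {k : Fin τ} (sb : SbarN 𝓐 tp) (e : Ext 𝓐 tp k) :
    SbarN 𝓐 (k.val + 1) :=
  fun s =>
    if h : s.1.val < tp then sb ⟨s.1, h⟩
    else e ⟨s.1, ⟨not_lt.mp h, Nat.lt_succ_iff.mp s.2⟩⟩

/-- The observed data structure `Z = (L_1, A_1, …, L_τ, A_τ, Y)` with its law `μ`. -/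
structure Model (𝓐 𝓛 : Fin τ → Type) (Ω : Type) [MeasurableSpace Ω] where
  μ : Measure Ω
  L : ∀ t : Fin τ, Ω → 𝓛 t
  A : ∀ t : Fin τ, Ω → 𝓐 t
  Y : Ω → ℝ

variable {Ω : Type} [MeasurableSpace Ω]

/-- The observed history process `ω ↦ H_t(ω)`. -/
def Model.Hproc (M : Model 𝓐 𝓛 Ω) (t : Fin τ) (ω : Ω) : Hist 𝓐 𝓛 t :=
  (fun s => M.L s.1 ω, fun s => M.A s.1 ω)

/-- The event `{H_t = h}`. -/
def Model.histEvent (M : Model 𝓐 𝓛 Ω) (t : Fin τ) (h : Hist 𝓐 𝓛 t) : Set Ω :=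
  {ω | M.Hproc t ω = h}

/-- The event `{A_t = a, H_t = h}`. -/
def Model.condEvent (M : Model 𝓐 𝓛 Ω) (t : Fin τ) (a : 𝓐 t) (h : Hist 𝓐 𝓛 t) : Set Ω :=
  {ω | M.A t ω = a} ∩ M.histEvent t h

/-- Conditional expectation given an event, defined as a ratio. -/
noncomputable def condExpOn (μ : Measure Ω) (S : Set Ω) (X : Ω → ℝ) : ℝ :=
  (∫ ω in S, X ω ∂μ) / (μ S).toReal

/-- The true treatment mechanism `g_t(a ∣ h) = P(A_t = a ∣ H_t = h)`. -/
noncomputable def Model.g (M : Model 𝓐 𝓛 Ω) (t : Fin τ) (a : 𝓐 t) (h : Hist 𝓐 𝓛 t) : ℝ :=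
  (M.μ (M.condEvent t a h)).toReal / (M.μ (M.histEvent t h)).toReal

/-- Full positivity: `P(A_t = a, H_t = h) > 0` for every `t`, `a`, `h`. -/
def Model.Positivity (M : Model 𝓐 𝓛 Ω) : Prop :=
  ∀ (t : Fin τ) (a : 𝓐 t) (h : Hist 𝓐 𝓛 t), 0 < M.μ (M.condEvent t a h)

/-- Measurability of the observed variables. -/
def Model.Meas (M : Model 𝓐 𝓛 Ω) : Prop :=
  (∀ (t : Fin τ) (a : 𝓐 t), MeasurableSet {ω | M.A t ω = a}) ∧
  (∀ (t : Fin τ) (l : 𝓛 t), MeasurableSet {ω | M.L t ω = l}) ∧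
  Measurable M.Y

/-- `q_t` obtained from `m_t`:
`q_t(s̄_{t-1}, a_t, h_t) = m_t((s̄_{t-1},a_t), d_t((s̄_{t-1},a_t), h_t), h_t)`. -/
def qOf (d : Policy 𝓐 𝓛)
    (m : ∀ t : Fin τ, SbarN 𝓐 (t.val + 1) → 𝓐 t → Hist 𝓐 𝓛 t → ℝ)
    (t : Fin τ) (sb : SbarN 𝓐 t.val) (a : 𝓐 t) (h : Hist 𝓐 𝓛 t) : ℝ :=
  m t (snoc sb a) (d t (snoc sb a) h) h

/-- `ω ↦ q_{k+1}(s̄_k, A_{k+1}(ω), H_{k+1}(ω))`, with the convention `q_{τ+1} := Y`. -/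
def Model.qNext (M : Model 𝓐 𝓛 Ω)
    (q : ∀ t : Fin τ, SbarN 𝓐 t.val → 𝓐 t → Hist 𝓐 𝓛 t → ℝ)
    (k : Fin τ) (sb : SbarN 𝓐 (k.val + 1)) (ω : Ω) : ℝ :=
  if h : k.val + 1 < τ then
    q ⟨k.val + 1, h⟩ sb (M.A ⟨k.val + 1, h⟩ ω) (M.Hproc ⟨k.val + 1, h⟩ ω)
  else M.Y ω

/-- `m` is the (true) sequential-regression family for the policy `d`:
`m_t(s̄_t, a_t, h_t) = E[q_{t+1}(s̄_t, A_{t+1}, H_{t+1}) ∣ A_t = a_t, H_t = h_t]`,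
with `q_{τ+1} = Y` (so at `t = τ` this reads `m_τ(a_τ,h_τ) = E[Y ∣ A_τ = a_τ, H_τ = h_τ]`,
extended independently of `s̄_τ`). -/
def IsSeqReg (M : Model 𝓐 𝓛 Ω) (d : Policy 𝓐 𝓛)
    (m : ∀ t : Fin τ, SbarN 𝓐 (t.val + 1) → 𝓐 t → Hist 𝓐 𝓛 t → ℝ) : Prop :=
  ∀ (t : Fin τ) (sb : SbarN 𝓐 (t.val + 1)) (a : 𝓐 t) (h : Hist 𝓐 𝓛 t),
    m t sb a h = condExpOn M.μ (M.condEvent t a h) (M.qNext (qOf d m) t sb)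

/-- The parameter `θ = E[q_1(A_1, H_1)]`. -/
noncomputable def theta (hτ : 0 < τ) (M : Model 𝓐 𝓛 Ω) (d : Policy 𝓐 𝓛)
    (m : ∀ t : Fin τ, SbarN 𝓐 (t.val + 1) → 𝓐 t → Hist 𝓐 𝓛 t → ℝ) : ℝ :=
  ∫ ω, qOf d m ⟨0, hτ⟩ (emptySbar 𝓐) (M.A ⟨0, hτ⟩ ω) (M.Hproc ⟨0, hτ⟩ ω) ∂M.μ

variable [∀ t, DecidableEq (𝓐 t)] [∀ t, Fintype (𝓐 t)]

/-- Indicator `D_{t,k}(s̄_k)`: all treatments at times `tp ≤ u ≤ k` (0-based) follow the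
policy applied to the augmented history. -/
noncomputable def Dind (M : Model 𝓐 𝓛 Ω) (d : Policy 𝓐 𝓛) (tp : ℕ) (k : Fin τ)
    (sb : SbarN 𝓐 (k.val + 1)) (ω : Ω) : ℝ :=
  ∏ u : Fin τ,
    if hu : tp ≤ u.val ∧ u.val ≤ k.val then
      (if M.A u ω = d u (restrictSb (Nat.succ_le_succ hu.2) sb) (M.Hproc u ω) then 1 else 0)
    else 1

/-- Density-ratio weight `∏_{u} g'_u(s_u ∣ H_u)/g'_u(A_u ∣ H_u)` over times `tp ≤ u ≤ k`. -/
noncomputable def weight (M : Model 𝓐 𝓛 Ω) (g' : ∀ t : Fin τ, 𝓐 t → Hist 𝓐 𝓛 t → ℝ)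
    (tp : ℕ) (k : Fin τ) (sb : SbarN 𝓐 (k.val + 1)) (ω : Ω) : ℝ :=
  ∏ u : Fin τ,
    if hu : tp ≤ u.val ∧ u.val ≤ k.val then
      g' u (sb ⟨u, Nat.lt_succ_of_le hu.2⟩) (M.Hproc u ω) / g' u (M.A u ω) (M.Hproc u ω)
    else 1

/-- The pseudo-outcome `φ_{t+1}(s̄_t, Z; η')`; here `tp` is the paper's `t` (so times are
0-based internally: the paper's time `u` is the index `u - 1`). -/
noncomputable def phi (M : Model 𝓐 𝓛 Ω) (d : Policy 𝓐 𝓛)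
    (g' : ∀ t : Fin τ, 𝓐 t → Hist 𝓐 𝓛 t → ℝ)
    (m' : ∀ t : Fin τ, SbarN 𝓐 (t.val + 1) → 𝓐 t → Hist 𝓐 𝓛 t → ℝ)
    (tp : ℕ) (sb : SbarN 𝓐 tp) (ω : Ω) : ℝ :=
  (∑ k : Fin τ,
    if tp ≤ k.val then
      ∑ e : Ext 𝓐 tp k,
        Dind M d tp k (mergeExt sb e) ω * weight M g' tp k (mergeExt sb e) ω *
          (M.qNext (qOf d m') k (mergeExt sb e) ω -
            m' k (mergeExt sb e) (M.A k ω) (M.Hproc k ω))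
    else 0) +
  (if h : tp < τ then
      qOf d m' ⟨tp, h⟩ sb (M.A ⟨tp, h⟩ ω) (M.Hproc ⟨tp, h⟩ ω)
    else M.Y ω)

/-- The remainder `Rem_t(s̄_t, a_t, h_t; η')` of Theorem 2, as a function of the conditioning
event `S` (`S = {A_t = a_t, H_t = h_t}`, or `S = univ` for `t = 0`). -/
noncomputable def rem (M : Model 𝓐 𝓛 Ω) (d : Policy 𝓐 𝓛)
    (g' : ∀ t : Fin τ, 𝓐 t → Hist 𝓐 𝓛 t → ℝ)
    (m' mtrue : ∀ t : Fin τ, SbarN 𝓐 (t.val + 1) → 𝓐 t → Hist 𝓐 𝓛 t → ℝ)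
    (tp : ℕ) (sb : SbarN 𝓐 tp) (S : Set Ω) : ℝ :=
  ∑ k : Fin τ,
    if tp ≤ k.val then
      ∑ e : Ext 𝓐 tp k,
        condExpOn M.μ S (fun ω =>
          Dind M d tp k (mergeExt sb e) ω *
          (∏ r : Fin τ,
            if hr : tp ≤ r.val ∧ r.val < k.val then
              g' r (mergeExt sb e ⟨r, Nat.lt_succ_of_lt hr.2⟩) (M.Hproc r ω) /
                g' r (M.A r ω) (M.Hproc r ω)
            else 1) *
          (M.g k (mergeExt sb e ⟨k, Nat.lt_succ_self _⟩) (M.Hproc k ω) /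
              M.g k (M.A k ω) (M.Hproc k ω) -
            g' k (mergeExt sb e ⟨k, Nat.lt_succ_self _⟩) (M.Hproc k ω) /
              g' k (M.A k ω) (M.Hproc k ω)) *
          (m' k (mergeExt sb e) (M.A k ω) (M.Hproc k ω) -
            mtrue k (mergeExt sb e) (M.A k ω) (M.Hproc k ω)))
    else 0


/-! ### Auxiliary lemmas for the three-term decomposition -/

section Aux

variable {τ : ℕ} {𝓐 𝓛 : Fin τ → Type} {Ω : Type} [MeasurableSpace Ω]

lemma measurableSet_histEvent (M : Model 𝓐 𝓛 Ω) (hmeas : M.Meas) (t : Fin τ)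
    (h : Hist 𝓐 𝓛 t) : MeasurableSet (M.histEvent t h) := by
  have hrw : M.histEvent t h =
      (⋂ s : {s : Fin τ // s ≤ t}, {ω | M.L s.1 ω = h.1 s}) ∩
      ⋂ s : {s : Fin τ // s < t}, {ω | M.A s.1 ω = h.2 s} := by
    ext ω
    simp only [Model.histEvent, Model.Hproc, Set.mem_setOf_eq, Set.mem_inter_iff,
      Set.mem_iInter, Prod.ext_iff, funext_iff]
  rw [hrw]
  exact (MeasurableSet.iInter fun s => hmeas.2.1 s.1 (h.1 s)).inter
    (MeasurableSet.iInter fun s => hmeas.1 s.1 (h.2 s))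

lemma measurableSet_condEvent (M : Model 𝓐 𝓛 Ω) (hmeas : M.Meas) (t : Fin τ)
    (a : 𝓐 t) (h : Hist 𝓐 𝓛 t) : MeasurableSet (M.condEvent t a h) :=
  (hmeas.1 t a).inter (measurableSet_histEvent M hmeas t h)

lemma setIntegral_partition {ι : Type} [Fintype ι] (μ : Measure Ω)
    (c : ι → Set Ω) (hmc : ∀ i, MeasurableSet (c i)) (hc : ∀ ω, ∃! i, ω ∈ c i)
    {S : Set Ω} (hS : MeasurableSet S) {F : Ω → ℝ} (hF : Integrable F μ) :
    ∫ ω in S, F ω ∂μ = ∑ i, ∫ ω in S ∩ c i, F ω ∂μ := by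
  have hpt : ∀ ω, S.indicator F ω = ∑ i, (S ∩ c i).indicator F ω := by
    intro ω
    by_cases hω : ω ∈ S
    · obtain ⟨i₀, hi₀, huniq⟩ := hc ω
      rw [Set.indicator_of_mem hω,
        Finset.sum_eq_single i₀
          (fun j _ hj => Set.indicator_of_notMem (fun hmem => hj (huniq j hmem.2)) F)
          (fun hmem => absurd (Finset.mem_univ i₀) hmem)]
      exact (Set.indicator_of_mem (Set.mem_inter hω hi₀) F).symm
    · rw [Set.indicator_of_notMem hω, Finset.sum_eq_zero]
      exact fun i _ => Set.indicator_of_notMem (fun hmem => hω hmem.1) F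
  calc ∫ ω in S, F ω ∂μ = ∫ ω, S.indicator F ω ∂μ := (integral_indicator hS).symm
    _ = ∫ ω, ∑ i, (S ∩ c i).indicator F ω ∂μ := by simp_rw [hpt]
    _ = ∑ i, ∫ ω, (S ∩ c i).indicator F ω ∂μ :=
        integral_finset_sum _ fun i _ => hF.indicator (hS.inter (hmc i))
    _ = ∑ i, ∫ ω in S ∩ c i, F ω ∂μ :=
        Finset.sum_congr rfl fun i _ => integral_indicator (hS.inter (hmc i))

lemma integrable_factor [∀ t, Fintype (𝓐 t)] [∀ t, DecidableEq (𝓐 t)]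
    [∀ t, Fintype (𝓛 t)]
    (M : Model 𝓐 𝓛 Ω) (hmeas : M.Meas) (k : Fin τ)
    (f : 𝓐 k → Hist 𝓐 𝓛 k → Ω → ℝ) (hf : ∀ a h, Integrable (f a h) M.μ) :
    Integrable (fun ω => f (M.A k ω) (M.Hproc k ω) ω) M.μ := by
  classical
  have hrepr : (fun ω => f (M.A k ω) (M.Hproc k ω) ω) =
      fun ω => ∑ p : 𝓐 k × Hist 𝓐 𝓛 k,
        (M.condEvent k p.1 p.2).indicator (f p.1 p.2) ω := by
    funext ω
    rw [Finset.sum_eq_single (M.A k ω, M.Hproc k ω)]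
    · have hmem : ω ∈ M.condEvent k (M.A k ω, M.Hproc k ω).1 (M.A k ω, M.Hproc k ω).2 :=
        Set.mem_inter rfl rfl
      exact (Set.indicator_of_mem hmem
        (f (M.A k ω, M.Hproc k ω).1 (M.A k ω, M.Hproc k ω).2)).symm
    · intro p _ hp
      refine Set.indicator_of_notMem (fun hmem => hp ?_) _
      exact Prod.ext (hmem.1 : M.A k ω = p.1).symm (hmem.2 : M.Hproc k ω = p.2).symm
    · intro hmem; exact absurd (Finset.mem_univ _) hmem
  rw [hrepr]
  exact integrable_finset_sum _ fun p _ =>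
    (hf p.1 p.2).indicator (measurableSet_condEvent M hmeas k p.1 p.2)

lemma final_algebra {A : Type} [Fintype A] [DecidableEq A]
    (P : A → ℝ) (Ph : ℝ) (g1 : A → ℝ) (ds : A → A) (M1 IQ I1 : A → A → ℝ)
    (hP : ∀ a, P a ≠ 0) (hPh : Ph ≠ 0) (hg1 : ∀ a, g1 a ≠ 0) :
    ∑ a, P a * (M1 a (ds a) - IQ a (ds a) / P (ds a)) =
      (∑ a, P a * (∑ s, (if a = ds s then (1:ℝ) else 0) *
          (P s / Ph / (P a / Ph) - g1 s / g1 a) * (M1 s a - IQ s a / P a)))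
      - (∑ a, ∑ s, (if a = ds s then (1:ℝ) else 0) * (g1 s / g1 a) *
          (I1 s a - P a * M1 s a))
      + (∑ a, P a * (∑ s, (if a = ds s then (1:ℝ) else 0) * (g1 s / g1 a) *
          ((I1 s a - IQ s a) / P a))) := by
  have hterm : ∀ a s : A,
      P a * ((if a = ds s then (1:ℝ) else 0) *
          (P s / Ph / (P a / Ph) - g1 s / g1 a) * (M1 s a - IQ s a / P a))
      - (if a = ds s then (1:ℝ) else 0) * (g1 s / g1 a) * (I1 s a - P a * M1 s a)
      + P a * ((if a = ds s then (1:ℝ) else 0) * (g1 s / g1 a) *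
          ((I1 s a - IQ s a) / P a))
      = (if a = ds s then (1:ℝ) else 0) * (P s * (M1 s a - IQ s a / P a)) := by
    intro a s
    by_cases hd : a = ds s
    · simp only [if_pos hd]
      have h1 := hP a; have h2 := hPh; have h3 := hg1 a; have h4 := hg1 s
      field_simp
      ring
    · simp [hd]
  have h1 : (∑ a, P a * (∑ s, (if a = ds s then (1:ℝ) else 0) *
          (P s / Ph / (P a / Ph) - g1 s / g1 a) * (M1 s a - IQ s a / P a)))
      - (∑ a, ∑ s, (if a = ds s then (1:ℝ) else 0) * (g1 s / g1 a) *
          (I1 s a - P a * M1 s a))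
      + (∑ a, P a * (∑ s, (if a = ds s then (1:ℝ) else 0) * (g1 s / g1 a) *
          ((I1 s a - IQ s a) / P a)))
      = ∑ a, ∑ s : A, (if a = ds s then (1:ℝ) else 0) *
          (P s * (M1 s a - IQ s a / P a)) := by
    simp_rw [Finset.mul_sum, ← Finset.sum_sub_distrib, ← Finset.sum_add_distrib]
    exact Finset.sum_congr rfl fun a _ => Finset.sum_congr rfl fun s _ => hterm a s
  rw [h1, Finset.sum_comm]
  refine Finset.sum_congr rfl fun s _ => ?_
  simp only [ite_mul, one_mul, zero_mul, Finset.sum_ite_eq', Finset.mem_univ, if_true]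

end Aux

/-- **One-step three-term error decomposition** (the inductive engine in the proof of the
conditional von Mises expansion, Supplementary Materials §3).  Fix a paper-time
`k ∈ {1, …, τ}` (internally a 0-based index `k`).  Writing `D_k(s̄_k) = 1{A_k = d_k(s̄_k, H_k)}`
and `s̄_k = (s̄_{k-1}, s_k)`, for every `s̄_{k-1}` and every `(a, h)` at time `k-1`:
`E[q_{k,1}(s̄_{k-1}, A_k, H_k) − q_k(s̄_{k-1}, A_k, H_k) ∣ A_{k-1} = a, H_{k-1} = h]` equals the
three-term expression of the statement, where for paper `k = 1` the outer conditioning is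
omitted (unconditional expectations). -/
theorem one_step_three_term_decomposition
    [∀ t, Nonempty (𝓐 t)] [∀ t, Fintype (𝓛 t)] [∀ t, Nonempty (𝓛 t)]
    (M : Model 𝓐 𝓛 Ω) [IsProbabilityMeasure M.μ]
    (hmeas : M.Meas) (hpos : M.Positivity)
    (d : Policy 𝓐 𝓛)
    (k : Fin τ)
    -- the step outcomes Q, Q₁ (bounded random variables, one for each s̄_k)
    (Q Q₁ : SbarN 𝓐 (k.val + 1) → Ω → ℝ)
    (hQbdd : ∃ C, ∀ (sbk : SbarN 𝓐 (k.val + 1)) (ω : Ω), |Q sbk ω| ≤ C ∧ |Q₁ sbk ω| ≤ C)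
    (hQmeas : ∀ sbk : SbarN 𝓐 (k.val + 1), Measurable (Q sbk) ∧ Measurable (Q₁ sbk))
    -- the true step regression m_k and its q_k
    (mk : SbarN 𝓐 (k.val + 1) → 𝓐 k → Hist 𝓐 𝓛 k → ℝ)
    (hmk : ∀ (sbk : SbarN 𝓐 (k.val + 1)) (a : 𝓐 k) (h : Hist 𝓐 𝓛 k),
      mk sbk a h = condExpOn M.μ (M.condEvent k a h) (Q sbk))
    (qk : SbarN 𝓐 k.val → 𝓐 k → Hist 𝓐 𝓛 k → ℝ)
    (hqk : ∀ (sb : SbarN 𝓐 k.val) (a : 𝓐 k) (h : Hist 𝓐 𝓛 k),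
      qk sb a h = mk (snoc sb a) (d k (snoc sb a) h) h)
    -- an arbitrary m_{k,1} and its q_{k,1}
    (mk1 : SbarN 𝓐 (k.val + 1) → 𝓐 k → Hist 𝓐 𝓛 k → ℝ)
    (qk1 : SbarN 𝓐 k.val → 𝓐 k → Hist 𝓐 𝓛 k → ℝ)
    (hqk1 : ∀ (sb : SbarN 𝓐 k.val) (a : 𝓐 k) (h : Hist 𝓐 𝓛 k),
      qk1 sb a h = mk1 (snoc sb a) (d k (snoc sb a) h) h)
    -- arbitrary positive weights g_{k,1}
    (gk1 : 𝓐 k → Hist 𝓐 𝓛 k → ℝ)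
    (hgk1 : ∀ (a : 𝓐 k) (h : Hist 𝓐 𝓛 k), 0 < gk1 a h)
    (sb : SbarN 𝓐 k.val) :
    -- paper k ≥ 2: conditioning on the previous time j (with j.val + 1 = k.val)
    (∀ (j : Fin τ), j.val + 1 = k.val → ∀ (a : 𝓐 j) (h : Hist 𝓐 𝓛 j),
      condExpOn M.μ (M.condEvent j a h)
          (fun ω => qk1 sb (M.A k ω) (M.Hproc k ω) - qk sb (M.A k ω) (M.Hproc k ω)) =
        condExpOn M.μ (M.condEvent j a h) (fun ω =>
          ∑ s : 𝓐 k,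
            (if M.A k ω = d k (snoc sb s) (M.Hproc k ω) then (1 : ℝ) else 0) *
            (M.g k s (M.Hproc k ω) / M.g k (M.A k ω) (M.Hproc k ω) -
              gk1 s (M.Hproc k ω) / gk1 (M.A k ω) (M.Hproc k ω)) *
            (mk1 (snoc sb s) (M.A k ω) (M.Hproc k ω) -
              mk (snoc sb s) (M.A k ω) (M.Hproc k ω))) -
        condExpOn M.μ (M.condEvent j a h) (fun ω =>
          ∑ s : 𝓐 k,
            (if M.A k ω = d k (snoc sb s) (M.Hproc k ω) then (1 : ℝ) else 0) *
            (gk1 s (M.Hproc k ω) / gk1 (M.A k ω) (M.Hproc k ω)) *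
            (Q₁ (snoc sb s) ω - mk1 (snoc sb s) (M.A k ω) (M.Hproc k ω))) +
        condExpOn M.μ (M.condEvent j a h) (fun ω =>
          ∑ s : 𝓐 k,
            (if M.A k ω = d k (snoc sb s) (M.Hproc k ω) then (1 : ℝ) else 0) *
            (gk1 s (M.Hproc k ω) / gk1 (M.A k ω) (M.Hproc k ω)) *
            condExpOn M.μ (M.condEvent k (M.A k ω) (M.Hproc k ω))
              (fun ω' => Q₁ (snoc sb s) ω' - Q (snoc sb s) ω'))) ∧
    -- paper k = 1: unconditional expectations
    (k.val = 0 →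
      (∫ ω, (qk1 sb (M.A k ω) (M.Hproc k ω) - qk sb (M.A k ω) (M.Hproc k ω)) ∂M.μ) =
        (∫ ω, (∑ s : 𝓐 k,
            (if M.A k ω = d k (snoc sb s) (M.Hproc k ω) then (1 : ℝ) else 0) *
            (M.g k s (M.Hproc k ω) / M.g k (M.A k ω) (M.Hproc k ω) -
              gk1 s (M.Hproc k ω) / gk1 (M.A k ω) (M.Hproc k ω)) *
            (mk1 (snoc sb s) (M.A k ω) (M.Hproc k ω) -
              mk (snoc sb s) (M.A k ω) (M.Hproc k ω))) ∂M.μ) -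
        (∫ ω, (∑ s : 𝓐 k,
            (if M.A k ω = d k (snoc sb s) (M.Hproc k ω) then (1 : ℝ) else 0) *
            (gk1 s (M.Hproc k ω) / gk1 (M.A k ω) (M.Hproc k ω)) *
            (Q₁ (snoc sb s) ω - mk1 (snoc sb s) (M.A k ω) (M.Hproc k ω))) ∂M.μ) +
        (∫ ω, (∑ s : 𝓐 k,
            (if M.A k ω = d k (snoc sb s) (M.Hproc k ω) then (1 : ℝ) else 0) *
            (gk1 s (M.Hproc k ω) / gk1 (M.A k ω) (M.Hproc k ω)) *
            condExpOn M.μ (M.condEvent k (M.A k ω) (M.Hproc k ω))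
              (fun ω' => Q₁ (snoc sb s) ω' - Q (snoc sb s) ω')) ∂M.μ)) := by
  classical
  obtain ⟨C, hC⟩ := hQbdd
  have hQint : ∀ sbk, Integrable (Q sbk) M.μ := fun sbk =>
    (integrable_const C).mono' (hQmeas sbk).1.aestronglyMeasurable
      (Filter.Eventually.of_forall fun ω => by
        rw [Real.norm_eq_abs]; exact (hC sbk ω).1)
  have hQ1int : ∀ sbk, Integrable (Q₁ sbk) M.μ := fun sbk =>
    (integrable_const C).mono' (hQmeas sbk).2.aestronglyMeasurable
      (Filter.Eventually.of_forall fun ω => by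
        rw [Real.norm_eq_abs]; exact (hC sbk ω).2)
  have hFint : Integrable (fun ω =>
      qk1 sb (M.A k ω) (M.Hproc k ω) - qk sb (M.A k ω) (M.Hproc k ω)) M.μ :=
    integrable_factor M hmeas k (fun a h _ => qk1 sb a h - qk sb a h)
      (fun a h => integrable_const _)
  have hG1int : Integrable (fun ω => (∑ s : 𝓐 k,
            (if M.A k ω = d k (snoc sb s) (M.Hproc k ω) then (1 : ℝ) else 0) *
            (M.g k s (M.Hproc k ω) / M.g k (M.A k ω) (M.Hproc k ω) -
              gk1 s (M.Hproc k ω) / gk1 (M.A k ω) (M.Hproc k ω)) *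
            (mk1 (snoc sb s) (M.A k ω) (M.Hproc k ω) -
              mk (snoc sb s) (M.A k ω) (M.Hproc k ω)))) M.μ :=
    integrable_factor M hmeas k (fun a h _ => ∑ s : 𝓐 k,
        (if a = d k (snoc sb s) h then (1 : ℝ) else 0) *
        (M.g k s h / M.g k a h - gk1 s h / gk1 a h) *
        (mk1 (snoc sb s) a h - mk (snoc sb s) a h))
      (fun a h => integrable_const _)
  have hG2int : Integrable (fun ω => (∑ s : 𝓐 k,
            (if M.A k ω = d k (snoc sb s) (M.Hproc k ω) then (1 : ℝ) else 0) *
            (gk1 s (M.Hproc k ω) / gk1 (M.A k ω) (M.Hproc k ω)) *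
            (Q₁ (snoc sb s) ω - mk1 (snoc sb s) (M.A k ω) (M.Hproc k ω)))) M.μ :=
    integrable_factor M hmeas k (fun a h ω => ∑ s : 𝓐 k,
        (if a = d k (snoc sb s) h then (1 : ℝ) else 0) * (gk1 s h / gk1 a h) *
        (Q₁ (snoc sb s) ω - mk1 (snoc sb s) a h))
      (fun a h => integrable_finset_sum _ fun s _ =>
        (((hQ1int (snoc sb s)).sub (integrable_const _)).const_mul _))
  have hG3int : Integrable (fun ω => (∑ s : 𝓐 k,
            (if M.A k ω = d k (snoc sb s) (M.Hproc k ω) then (1 : ℝ) else 0) *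
            (gk1 s (M.Hproc k ω) / gk1 (M.A k ω) (M.Hproc k ω)) *
            condExpOn M.μ (M.condEvent k (M.A k ω) (M.Hproc k ω))
              (fun ω' => Q₁ (snoc sb s) ω' - Q (snoc sb s) ω'))) M.μ :=
    integrable_factor M hmeas k (fun a h _ => ∑ s : 𝓐 k,
        (if a = d k (snoc sb s) h then (1 : ℝ) else 0) * (gk1 s h / gk1 a h) *
        condExpOn M.μ (M.condEvent k a h)
          (fun ω' => Q₁ (snoc sb s) ω' - Q (snoc sb s) ω'))
      (fun a h => integrable_const _)
  have key : ∀ h' : Hist 𝓐 𝓛 k,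
      (∫ ω in M.histEvent k h',
        (qk1 sb (M.A k ω) (M.Hproc k ω) - qk sb (M.A k ω) (M.Hproc k ω)) ∂M.μ) =
      (∫ ω in M.histEvent k h', (∑ s : 𝓐 k,
            (if M.A k ω = d k (snoc sb s) (M.Hproc k ω) then (1 : ℝ) else 0) *
            (M.g k s (M.Hproc k ω) / M.g k (M.A k ω) (M.Hproc k ω) -
              gk1 s (M.Hproc k ω) / gk1 (M.A k ω) (M.Hproc k ω)) *
            (mk1 (snoc sb s) (M.A k ω) (M.Hproc k ω) -
              mk (snoc sb s) (M.A k ω) (M.Hproc k ω))) ∂M.μ) -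
      (∫ ω in M.histEvent k h', (∑ s : 𝓐 k,
            (if M.A k ω = d k (snoc sb s) (M.Hproc k ω) then (1 : ℝ) else 0) *
            (gk1 s (M.Hproc k ω) / gk1 (M.A k ω) (M.Hproc k ω)) *
            (Q₁ (snoc sb s) ω - mk1 (snoc sb s) (M.A k ω) (M.Hproc k ω))) ∂M.μ) +
      (∫ ω in M.histEvent k h', (∑ s : 𝓐 k,
            (if M.A k ω = d k (snoc sb s) (M.Hproc k ω) then (1 : ℝ) else 0) *
            (gk1 s (M.Hproc k ω) / gk1 (M.A k ω) (M.Hproc k ω)) *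
            condExpOn M.μ (M.condEvent k (M.A k ω) (M.Hproc k ω))
              (fun ω' => Q₁ (snoc sb s) ω' - Q (snoc sb s) ω')) ∂M.μ) := by
    intro h'
    have hCmeas : ∀ a : 𝓐 k, MeasurableSet (M.condEvent k a h') := fun a =>
      measurableSet_condEvent M hmeas k a h'
    have hsplit : ∀ (F : Ω → ℝ), Integrable F M.μ →
        (∫ ω in M.histEvent k h', F ω ∂M.μ)
          = ∑ a : 𝓐 k, ∫ ω in M.condEvent k a h', F ω ∂M.μ := by
      intro F hF
      rw [setIntegral_partition M.μ (fun a : 𝓐 k => {ω' | M.A k ω' = a})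
        (fun a => hmeas.1 k a) (fun ω => ⟨M.A k ω, rfl, fun y hy => hy.symm⟩)
        (measurableSet_histEvent M hmeas k h') hF]
      exact Finset.sum_congr rfl fun a _ => by rw [Set.inter_comm]; rfl
    have hPpos : ∀ a : 𝓐 k, 0 < (M.μ (M.condEvent k a h')).toReal := fun a =>
      ENNReal.toReal_pos (hpos k a h').ne' (measure_ne_top _ _)
    have hPhpos : 0 < (M.μ (M.histEvent k h')).toReal := by
      refine ENNReal.toReal_pos ?_ (measure_ne_top _ _)
      exact (lt_of_lt_of_le (hpos k (Classical.arbitrary (𝓐 k)) h')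
        (measure_mono Set.inter_subset_right)).ne'
    have hmemA : ∀ (a : 𝓐 k) (ω : Ω), ω ∈ M.condEvent k a h' →
        M.A k ω = a ∧ M.Hproc k ω = h' := fun a ω hω => ⟨hω.1, hω.2⟩
    have hAtomF : ∀ a : 𝓐 k, (∫ ω in M.condEvent k a h',
        (qk1 sb (M.A k ω) (M.Hproc k ω) - qk sb (M.A k ω) (M.Hproc k ω)) ∂M.μ)
        = (M.μ (M.condEvent k a h')).toReal * (qk1 sb a h' - qk sb a h') := by
      intro a
      rw [setIntegral_congr_fun (hCmeas a)
        (g := fun _ => qk1 sb a h' - qk sb a h')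
        (fun ω hω => by obtain ⟨h1, h2⟩ := hmemA a ω hω; simp only [h1, h2]),
        setIntegral_const, smul_eq_mul, Measure.real]
    have hAtomG1 : ∀ a : 𝓐 k, (∫ ω in M.condEvent k a h', (∑ s : 𝓐 k,
            (if M.A k ω = d k (snoc sb s) (M.Hproc k ω) then (1 : ℝ) else 0) *
            (M.g k s (M.Hproc k ω) / M.g k (M.A k ω) (M.Hproc k ω) -
              gk1 s (M.Hproc k ω) / gk1 (M.A k ω) (M.Hproc k ω)) *
            (mk1 (snoc sb s) (M.A k ω) (M.Hproc k ω) -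
              mk (snoc sb s) (M.A k ω) (M.Hproc k ω))) ∂M.μ)
        = (M.μ (M.condEvent k a h')).toReal *
          (∑ s : 𝓐 k, (if a = d k (snoc sb s) h' then (1 : ℝ) else 0) *
            (M.g k s h' / M.g k a h' - gk1 s h' / gk1 a h') *
            (mk1 (snoc sb s) a h' - mk (snoc sb s) a h')) := by
      intro a
      rw [setIntegral_congr_fun (hCmeas a)
        (g := fun _ => ∑ s : 𝓐 k, (if a = d k (snoc sb s) h' then (1 : ℝ) else 0) *
          (M.g k s h' / M.g k a h' - gk1 s h' / gk1 a h') *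
          (mk1 (snoc sb s) a h' - mk (snoc sb s) a h'))
        (fun ω hω => by obtain ⟨h1, h2⟩ := hmemA a ω hω; simp only [h1, h2]),
        setIntegral_const, smul_eq_mul, Measure.real]
    have hAtomG2 : ∀ a : 𝓐 k, (∫ ω in M.condEvent k a h', (∑ s : 𝓐 k,
            (if M.A k ω = d k (snoc sb s) (M.Hproc k ω) then (1 : ℝ) else 0) *
            (gk1 s (M.Hproc k ω) / gk1 (M.A k ω) (M.Hproc k ω)) *
            (Q₁ (snoc sb s) ω - mk1 (snoc sb s) (M.A k ω) (M.Hproc k ω))) ∂M.μ)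
        = ∑ s : 𝓐 k, (if a = d k (snoc sb s) h' then (1 : ℝ) else 0) *
            (gk1 s h' / gk1 a h') *
            ((∫ ω in M.condEvent k a h', Q₁ (snoc sb s) ω ∂M.μ)
              - (M.μ (M.condEvent k a h')).toReal * mk1 (snoc sb s) a h') := by
      intro a
      rw [setIntegral_congr_fun (hCmeas a)
        (g := fun ω => ∑ s : 𝓐 k, (if a = d k (snoc sb s) h' then (1 : ℝ) else 0) *
          (gk1 s h' / gk1 a h') * (Q₁ (snoc sb s) ω - mk1 (snoc sb s) a h'))
        (fun ω hω => by obtain ⟨h1, h2⟩ := hmemA a ω hω; simp only [h1, h2])]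
      have hint : ∀ s ∈ (Finset.univ : Finset (𝓐 k)), Integrable (fun ω =>
          (if a = d k (snoc sb s) h' then (1 : ℝ) else 0) * (gk1 s h' / gk1 a h') *
          (Q₁ (snoc sb s) ω - mk1 (snoc sb s) a h'))
          (M.μ.restrict (M.condEvent k a h')) :=
        fun s _ => (((hQ1int (snoc sb s)).sub (integrable_const _)).const_mul _).restrict
      rw [integral_finset_sum _ hint]
      refine Finset.sum_congr rfl fun s _ => ?_
      rw [integral_const_mul, integral_sub ((hQ1int (snoc sb s)).restrict)
        (integrable_const (mk1 (snoc sb s) a h')), setIntegral_const, smul_eq_mul, Measure.real]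
    have hAtomG3 : ∀ a : 𝓐 k, (∫ ω in M.condEvent k a h', (∑ s : 𝓐 k,
            (if M.A k ω = d k (snoc sb s) (M.Hproc k ω) then (1 : ℝ) else 0) *
            (gk1 s (M.Hproc k ω) / gk1 (M.A k ω) (M.Hproc k ω)) *
            condExpOn M.μ (M.condEvent k (M.A k ω) (M.Hproc k ω))
              (fun ω' => Q₁ (snoc sb s) ω' - Q (snoc sb s) ω')) ∂M.μ)
        = (M.μ (M.condEvent k a h')).toReal *
          (∑ s : 𝓐 k, (if a = d k (snoc sb s) h' then (1 : ℝ) else 0) *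
            (gk1 s h' / gk1 a h') *
            condExpOn M.μ (M.condEvent k a h')
              (fun ω' => Q₁ (snoc sb s) ω' - Q (snoc sb s) ω')) := by
      intro a
      rw [setIntegral_congr_fun (hCmeas a)
        (g := fun _ => ∑ s : 𝓐 k, (if a = d k (snoc sb s) h' then (1 : ℝ) else 0) *
          (gk1 s h' / gk1 a h') *
          condExpOn M.μ (M.condEvent k a h')
            (fun ω' => Q₁ (snoc sb s) ω' - Q (snoc sb s) ω'))
        (fun ω hω => by obtain ⟨h1, h2⟩ := hmemA a ω hω; simp only [h1, h2]),
        setIntegral_const, smul_eq_mul, Measure.real]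
    have hIsub : ∀ (s a : 𝓐 k),
        (∫ ω in M.condEvent k a h', (Q₁ (snoc sb s) ω - Q (snoc sb s) ω) ∂M.μ)
        = (∫ ω in M.condEvent k a h', Q₁ (snoc sb s) ω ∂M.μ)
          - ∫ ω in M.condEvent k a h', Q (snoc sb s) ω ∂M.μ := fun s a =>
      integral_sub ((hQ1int _).restrict) ((hQint _).restrict)
    rw [hsplit _ hFint, hsplit _ hG1int, hsplit _ hG2int, hsplit _ hG3int]
    simp only [hAtomF, hAtomG1, hAtomG2, hAtomG3]
    simp only [hqk1, hqk, hmk, condExpOn, Model.g]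
    simp_rw [hIsub]
    exact final_algebra (fun a => (M.μ (M.condEvent k a h')).toReal)
      ((M.μ (M.histEvent k h')).toReal) (fun a => gk1 a h')
      (fun s => d k (snoc sb s) h')
      (fun s a => mk1 (snoc sb s) a h')
      (fun s a => ∫ ω in M.condEvent k a h', Q (snoc sb s) ω ∂M.μ)
      (fun s a => ∫ ω in M.condEvent k a h', Q₁ (snoc sb s) ω ∂M.μ)
      (fun a => (hPpos a).ne') hPhpos.ne' (fun a => (hgk1 a h').ne')
  have main : ∀ S : Set Ω, MeasurableSet S →
      (∀ ω ω' : Ω, M.Hproc k ω = M.Hproc k ω' → ω ∈ S → ω' ∈ S) →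
      (∫ ω in S,
        (qk1 sb (M.A k ω) (M.Hproc k ω) - qk sb (M.A k ω) (M.Hproc k ω)) ∂M.μ) =
      (∫ ω in S, (∑ s : 𝓐 k,
            (if M.A k ω = d k (snoc sb s) (M.Hproc k ω) then (1 : ℝ) else 0) *
            (M.g k s (M.Hproc k ω) / M.g k (M.A k ω) (M.Hproc k ω) -
              gk1 s (M.Hproc k ω) / gk1 (M.A k ω) (M.Hproc k ω)) *
            (mk1 (snoc sb s) (M.A k ω) (M.Hproc k ω) -
              mk (snoc sb s) (M.A k ω) (M.Hproc k ω))) ∂M.μ) - (∫ ω in S, (∑ s : 𝓐 k,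
            (if M.A k ω = d k (snoc sb s) (M.Hproc k ω) then (1 : ℝ) else 0) *
            (gk1 s (M.Hproc k ω) / gk1 (M.A k ω) (M.Hproc k ω)) *
            (Q₁ (snoc sb s) ω - mk1 (snoc sb s) (M.A k ω) (M.Hproc k ω))) ∂M.μ) + (∫ ω in S, (∑ s : 𝓐 k,
            (if M.A k ω = d k (snoc sb s) (M.Hproc k ω) then (1 : ℝ) else 0) *
            (gk1 s (M.Hproc k ω) / gk1 (M.A k ω) (M.Hproc k ω)) *
            condExpOn M.μ (M.condEvent k (M.A k ω) (M.Hproc k ω))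
              (fun ω' => Q₁ (snoc sb s) ω' - Q (snoc sb s) ω')) ∂M.μ) := by
    intro S hS hsat
    rw [setIntegral_partition M.μ (fun h' => M.histEvent k h')
        (fun h' => measurableSet_histEvent M hmeas k h')
        (fun ω => ⟨M.Hproc k ω, rfl, fun y hy => hy.symm⟩) hS hFint,
      setIntegral_partition M.μ (fun h' => M.histEvent k h')
        (fun h' => measurableSet_histEvent M hmeas k h')
        (fun ω => ⟨M.Hproc k ω, rfl, fun y hy => hy.symm⟩) hS hG1int,
      setIntegral_partition M.μ (fun h' => M.histEvent k h')
        (fun h' => measurableSet_histEvent M hmeas k h')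
        (fun ω => ⟨M.Hproc k ω, rfl, fun y hy => hy.symm⟩) hS hG2int,
      setIntegral_partition M.μ (fun h' => M.histEvent k h')
        (fun h' => measurableSet_histEvent M hmeas k h')
        (fun ω => ⟨M.Hproc k ω, rfl, fun y hy => hy.symm⟩) hS hG3int,
      ← Finset.sum_sub_distrib, ← Finset.sum_add_distrib]
    refine Finset.sum_congr rfl fun h' _ => ?_
    by_cases hne : (S ∩ M.histEvent k h').Nonempty
    · have hSE : S ∩ M.histEvent k h' = M.histEvent k h' := by
        obtain ⟨ω₀, hω₀S, hω₀E⟩ := hne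
        refine Set.eq_of_subset_of_subset Set.inter_subset_right fun ω hω => ?_
        exact Set.mem_inter (hsat ω₀ ω
          ((hω₀E : M.Hproc k ω₀ = h').trans (hω : M.Hproc k ω = h').symm) hω₀S) hω
      rw [hSE]; exact key h'
    · rw [Set.not_nonempty_iff_eq_empty.mp hne]
      simp
  constructor
  · intro j hjk1 a h
    have hjk : j < k := by rw [Fin.lt_def]; omega
    have hsatS : ∀ ω ω' : Ω, M.Hproc k ω = M.Hproc k ω' →
        ω ∈ M.condEvent j a h → ω' ∈ M.condEvent j a h := by
      intro ω ω' hH hω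
      obtain ⟨h1, h2⟩ := hω
      refine Set.mem_inter ?_ ?_
      · have hA : M.A j ω = M.A j ω' :=
          congrArg (fun p : Hist 𝓐 𝓛 k => p.2 ⟨j, hjk⟩) hH
        exact hA.symm.trans (h1 : M.A j ω = a)
      · have hHH : M.Hproc j ω' = M.Hproc j ω := by
          refine Prod.ext (funext fun s => ?_) (funext fun s => ?_)
          · exact (congrArg (fun p : Hist 𝓐 𝓛 k =>
              p.1 ⟨s.1, le_trans s.2 hjk.le⟩) hH).symm
          · exact (congrArg (fun p : Hist 𝓐 𝓛 k =>
              p.2 ⟨s.1, lt_trans s.2 hjk⟩) hH).symm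
        exact hHH.trans (h2 : M.Hproc j ω = h)
    have hmain := main (M.condEvent j a h) (measurableSet_condEvent M hmeas j a h) hsatS
    simp only [condExpOn] at hmain ⊢
    rw [hmain, add_div, sub_div]
  · intro _
    have hmain := main Set.univ MeasurableSet.univ (fun ω ω' _ _ => Set.mem_univ ω')
    simpa only [setIntegral_univ] using hmain

end GLMTP
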